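/- arXiv:1111.5403 — 4 statements merged into one kernel-verified Lean document; each statement's English description precedes it below -/
import Mathlib

section
/- Let a > 1 be an integer. There is a constant C (depending only on a) such that for all sufficiently large X and every real number z with log log X ≤ z ≤ X, the number of positive integers n ≤ X divisible by some prime r > z with ℓ*_a(r) < r^(1/2)/log r is at most C·X/log z. -/
open Filter

/-- The largest divisor of `n` coprime to `a`. -/
def coprimePart (a n : ℕ) : ℕ :=
  (n.divisors.filter fun d => Nat.Coprime d a).sup id

/-- `ℓ*_a(n)`: the multiplicative order of `a` modulo the largest divisor of `n`
coprime to `a`. -/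
noncomputable def lstar (a n : ℕ) : ℕ :=
  orderOf (a : ZMod (coprimePart a n))


lemma coprimePart_eq_self {a r : ℕ} (hr : r.Prime) (h : ¬ r ∣ a) : coprimePart a r = r := by
  have hcop : Nat.Coprime r a := (Nat.Prime.coprime_iff_not_dvd hr).mpr h
  have hmem : r ∈ r.divisors.filter fun d => Nat.Coprime d a := by
    simp only [Finset.mem_filter, Nat.mem_divisors]
    exact ⟨⟨dvd_rfl, hr.ne_zero⟩, hcop⟩
  apply le_antisymm
  · apply Finset.sup_le
    intro d hd
    simp only [Finset.mem_filter, Nat.mem_divisors] at hd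
    exact Nat.le_of_dvd hr.pos hd.1.1
  · exact Finset.le_sup (f := id) hmem

lemma coprimePart_eq_one {a r : ℕ} (hr : r.Prime) (h : r ∣ a) : coprimePart a r = 1 := by
  apply le_antisymm
  · apply Finset.sup_le
    intro d hd
    simp only [Finset.mem_filter, Nat.mem_divisors] at hd
    rcases (Nat.dvd_prime hr).mp hd.1.1 with h1 | h1
    · simp [h1]
    · exfalso
      have : ¬ Nat.Coprime d a := by
        rw [h1, Nat.Prime.coprime_iff_not_dvd hr]
        exact fun hc => hc h
      exact this hd.2
  · apply Finset.le_sup (f := id)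
    simp only [Finset.mem_filter, Nat.mem_divisors]
    exact ⟨⟨one_dvd _, hr.ne_zero⟩, Nat.coprime_one_left _⟩

lemma lstar_eq_one_of_dvd {a r : ℕ} (hr : r.Prime) (h : r ∣ a) : lstar a r = 1 := by
  rw [lstar, coprimePart_eq_one hr h]
  exact orderOf_eq_one_iff.mpr (Subsingleton.elim _ _)

lemma lstar_pos {a r : ℕ} (ha : 1 < a) (hr : r.Prime) (h : ¬ r ∣ a) : 0 < lstar a r := by
  rw [lstar, coprimePart_eq_self hr h]
  haveI : Fact r.Prime := ⟨hr⟩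
  have hne : (a : ZMod r) ≠ 0 := by
    rw [Ne, ZMod.natCast_eq_zero_iff]
    exact h
  have hfin : IsOfFinOrder (a : ZMod r) :=
    isOfFinOrder_iff_pow_eq_one.mpr
      ⟨r - 1, Nat.sub_pos_of_lt hr.one_lt, ZMod.pow_card_sub_one_eq_one hne⟩
  exact hfin.orderOf_pos

lemma lstar_dvd {a r : ℕ} (ha : 1 < a) (hr : r.Prime) (h : ¬ r ∣ a) :
    r ∣ a ^ (lstar a r) - 1 := by
  haveI : Fact r.Prime := ⟨hr⟩
  have hord : (a : ZMod r) ^ (lstar a r) = 1 := by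
    rw [lstar, coprimePart_eq_self hr h]
    exact pow_orderOf_eq_one _
  have hge : 1 ≤ a ^ (lstar a r) := Nat.one_le_pow _ _ (by omega)
  rw [← ZMod.natCast_eq_zero_iff]
  push_cast [hge]
  rw [hord]
  ring


lemma count_lemma (F : Finset ℕ) (m : ℕ) (hm : m ≠ 0) (T : ℝ) (hT : 1 < T)
    (h : ∀ r ∈ F, r.Prime ∧ r ∣ m ∧ T < r) :
    (F.card : ℝ) * Real.log T ≤ Real.log m := by
  have hsub : F ⊆ m.primeFactors := by
    intro r hr
    exact Nat.mem_primeFactors.mpr ⟨(h r hr).1, (h r hr).2.1, hm⟩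
  have hprod : (∏ r ∈ F, r) ∣ m :=
    dvd_trans (Finset.prod_dvd_prod_of_subset _ _ _ hsub) (Nat.prod_primeFactors_dvd m)
  have hle : (∏ r ∈ F, r : ℕ) ≤ m := Nat.le_of_dvd (Nat.pos_of_ne_zero hm) hprod
  have hpow : T ^ F.card ≤ (m : ℝ) := by
    calc T ^ F.card = ∏ _r ∈ F, T := (Finset.prod_const T).symm
      _ ≤ ∏ r ∈ F, (r : ℝ) := by
          apply Finset.prod_le_prod (fun i _ => le_of_lt (lt_trans zero_lt_one hT))
          exact fun i hi => le_of_lt (h i hi).2.2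
      _ = ((∏ r ∈ F, r : ℕ) : ℝ) := by push_cast; ring
      _ ≤ (m : ℝ) := by exact_mod_cast hle
  have := Real.log_le_log (by positivity) hpow
  rwa [Real.log_pow] at this

lemma telescope_term {d : ℕ} (hd : 3 ≤ d) :
    1 / (d * (Real.log d)^3) ≤ 4 / (Real.log d)^2 - 4 / (Real.log (d+1))^2 := by
  have hd1 : (1:ℝ) ≤ d := by exact_mod_cast Nat.one_le_of_lt hd
  have hd3 : (3:ℝ) ≤ d := by exact_mod_cast hd
  have hL0 : 1 < Real.log d := by
    have : Real.exp 1 < 3 := lt_trans Real.exp_one_lt_d9 (by norm_num)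
    calc (1:ℝ) = Real.log (Real.exp 1) := (Real.log_exp 1).symm
      _ < Real.log d := Real.log_lt_log (Real.exp_pos 1) (lt_of_lt_of_le this hd3)
  set L0 := Real.log d with hL0def
  set L1 := Real.log (d+1) with hL1def
  have hL01 : L0 ≤ L1 := Real.log_le_log (by positivity) (by linarith)
  have hL1pos : 0 < L1 := by linarith
  have hL0pos : (0:ℝ) < L0 := by linarith
  have hdiff : 1 / ((d:ℝ)+1) ≤ L1 - L0 := by
    have h1 : Real.log ((d:ℝ)/((d:ℝ)+1)) ≤ (d:ℝ)/((d:ℝ)+1) - 1 :=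
      Real.log_le_sub_one_of_pos (by positivity)
    have h2 : Real.log ((d:ℝ)/((d:ℝ)+1)) = L0 - L1 := by
      rw [Real.log_div (by positivity) (by positivity)]
    have h3 : (d:ℝ)/((d:ℝ)+1) - 1 = -(1/((d:ℝ)+1)) := by field_simp; ring
    rw [h2, h3] at h1
    linarith
  have hL1le : L1 ≤ 2 * L0 := by
    have hsq : ((d:ℝ)+1) ≤ (d:ℝ)^2 := by nlinarith
    calc L1 ≤ Real.log ((d:ℝ)^2) := Real.log_le_log (by positivity) hsq
      _ = 2 * L0 := by rw [Real.log_pow]; norm_num; rfl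
  have keyineq : (8:ℝ) / (((d:ℝ)+1) * L0 * L1^2) ≤ 4 / L0^2 - 4 / L1^2 := by
    have heq : 4 / L0^2 - 4 / L1^2 = 4 * (L1 - L0) * (L1 + L0) / (L0^2 * L1^2) := by
      field_simp; ring
    rw [heq, div_le_div_iff₀ (by positivity) (by positivity)]
    have hA : 1 ≤ (L1 - L0) * ((d:ℝ)+1) := by
      rw [div_le_iff₀ (by positivity : (0:ℝ) < (d:ℝ)+1)] at hdiff
      linarith
    have step : 2*L0 ≤ (L1-L0)*((d:ℝ)+1)*(L1+L0) := by nlinarith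
    nlinarith [mul_le_mul_of_nonneg_right step (by positivity : (0:ℝ) ≤ L0*L1^2)]
  have final : 1 / ((d:ℝ) * L0^3) ≤ 8 / (((d:ℝ)+1) * L0 * L1^2) := by
    rw [div_le_div_iff₀ (by positivity) (by positivity)]
    have h1 : ((d:ℝ)+1) ≤ 2*(d:ℝ) := by linarith
    have h2 : L1^2 ≤ 4 * L0^2 := by nlinarith
    have h3 : ((d:ℝ)+1) * L1^2 ≤ (2*(d:ℝ)) * (4*L0^2) :=
      mul_le_mul h1 h2 (by positivity) (by positivity)
    nlinarith [mul_le_mul_of_nonneg_right h3 hL0pos.le]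
  calc 1 / ((d:ℝ) * L0^3) ≤ 8 / (((d:ℝ)+1) * L0 * L1^2) := final
    _ ≤ 4 / L0^2 - 4 / L1^2 := keyineq

lemma telescope (m : ℕ) (hm : 3 ≤ m) (b : ℕ) :
    ∑ d ∈ Finset.Ico m b, 1 / ((d:ℝ) * (Real.log d)^3) ≤ 4 / (Real.log m)^2 := by
  have hlogm : 0 < Real.log m := Real.log_pos (by exact_mod_cast hm.trans_lt' (by norm_num))
  suffices H : ∀ b : ℕ, m ≤ b → ∑ d ∈ Finset.Ico m b, 1 / ((d:ℝ) * (Real.log d)^3)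
      ≤ 4 / (Real.log m)^2 - 4 / (Real.log b)^2 by
    rcases Nat.lt_or_ge b m with hb | hb
    · rw [Finset.Ico_eq_empty (by omega)]
      simp only [Finset.sum_empty]
      positivity
    · have := H b hb
      have h0 : (0:ℝ) ≤ 4 / (Real.log b)^2 := by positivity
      linarith
  intro b
  induction b with
  | zero => intro h; omega
  | succ n ih =>
    intro hmn
    rcases Nat.lt_or_ge n m with hn | hn
    · have : n + 1 = m := by omega
      rw [this, Finset.Ico_self]
      simp
    · have hsum := ih hn
      rw [Finset.sum_Ico_succ_top hn]
      have hterm := telescope_term (d := n) (by omega)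
      push_cast at hterm ⊢
      linarith

lemma bad_prime_facts {a r : ℕ} (ha : 1 < a) (hr : r.Prime) (hz : (20:ℝ) < r)
    (hl : (lstar a r : ℝ) < Real.sqrt r / Real.log r) (h : ¬ r ∣ a) :
    ((lstar a r : ℝ)^2 < r) ∧ (4 * (lstar a r : ℝ)^2 * (Real.log (lstar a r))^2 < r) := by
  set d := lstar a r with hd
  have hrpos : (0:ℝ) < r := by linarith
  have hlogr : 1 < Real.log r := by
    rw [Real.lt_log_iff_exp_lt hrpos]
    calc Real.exp 1 < 2.7182818286 := Real.exp_one_lt_d9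
      _ < 20 := by norm_num
      _ < r := hz
  have hsq : Real.sqrt r * Real.sqrt r = r := Real.mul_self_sqrt hrpos.le
  have hmul : (d:ℝ) * Real.log r < Real.sqrt r := by
    rw [lt_div_iff₀ (by linarith : (0:ℝ) < Real.log r)] at hl
    exact hl
  have hd1 : 1 ≤ d := lstar_pos ha hr h
  have hd1' : (1:ℝ) ≤ d := by exact_mod_cast hd1
  have hdsqrt : (d:ℝ) < Real.sqrt r := by
    calc (d:ℝ) ≤ (d:ℝ) * Real.log r := le_mul_of_one_le_right (by linarith) hlogr.le
      _ < Real.sqrt r := hmul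
  have hd2 : (d:ℝ)^2 < r := by
    calc (d:ℝ)^2 = (d:ℝ) * (d:ℝ) := sq (d:ℝ) ▸ by ring
      _ < Real.sqrt r * Real.sqrt r := by
          apply mul_lt_mul' hdsqrt.le hdsqrt (by linarith) (by positivity)
      _ = r := hsq
  refine ⟨hd2, ?_⟩
  have hlogd : 0 ≤ Real.log d := Real.log_natCast_nonneg d
  have h2logd : 2 * Real.log d < Real.log r := by
    have : Real.log ((d:ℝ)^2) < Real.log r := Real.log_lt_log (by positivity) hd2
    rwa [Real.log_pow, Nat.cast_ofNat] at this
  have hkey : 2 * (d:ℝ) * Real.log d < Real.sqrt r := by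
    calc 2 * (d:ℝ) * Real.log d = (d:ℝ) * (2 * Real.log d) := by ring
      _ < (d:ℝ) * Real.log r := by
          apply mul_lt_mul_of_pos_left h2logd (by linarith)
      _ < Real.sqrt r := hmul
  calc 4 * (d:ℝ)^2 * (Real.log d)^2 = (2 * (d:ℝ) * Real.log d) * (2 * (d:ℝ) * Real.log d) := by ring
    _ < Real.sqrt r * Real.sqrt r := by
        apply mul_lt_mul' hkey.le hkey (by positivity) (by positivity)
    _ = r := hsq

set_option maxHeartbeats 1000000 in
lemma sum_bound (a : ℕ) (ha : 1 < a) (z : ℝ) (hz : 20 ≤ z) (N : ℕ) (badF : Finset ℕ)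
    (hbad : ∀ r ∈ badF, r.Prime ∧ z < (r:ℝ) ∧
      (lstar a r : ℝ) < Real.sqrt r / Real.log r ∧ r ≤ N) :
    ∑ r ∈ badF, (1:ℝ)/r ≤ 4 * Real.log a / Real.log z := by
  classical
  have ha0 : (0:ℝ) < a := by positivity
  have hloga : 0 < Real.log a := Real.log_pos (by exact_mod_cast ha)
  have hzpos : (0:ℝ) < z := by linarith
  have hlogz : 1 ≤ Real.log z := by
    rw [Real.le_log_iff_exp_le hzpos]
    calc Real.exp 1 ≤ 2.7182818286 := Real.exp_one_lt_d9.le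
      _ ≤ z := by linarith
  have hlogzpos : (0:ℝ) < Real.log z := by linarith
  set M : ℕ := ⌊Real.sqrt z⌋₊ with hM
  have hM4 : 4 ≤ M := by
    apply Nat.le_floor
    have h16 : (16:ℝ) ≤ z := by linarith
    have hs := Real.sq_sqrt hzpos.le
    have hsn := Real.sqrt_nonneg z
    push_cast
    nlinarith
  have hMz : ((M:ℝ))^2 ≤ z := by
    have h1 : (M:ℝ) ≤ Real.sqrt z := Nat.floor_le (Real.sqrt_nonneg z)
    nlinarith [Real.sq_sqrt hzpos.le, Real.sqrt_nonneg z]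
  -- basic facts for bad primes
  have hfact : ∀ r ∈ badF, (20:ℝ) < r ∧ 0 < r := by
    intro r hr
    obtain ⟨_, h1, _, _⟩ := hbad r hr
    constructor
    · linarith
    · have : (0:ℝ) < r := by linarith
      exact_mod_cast this
  set F0 : Finset ℕ := badF.filter (· ∣ a) with hF0
  set G : ℕ → Finset ℕ := fun d => badF.filter (fun r => ¬ r ∣ a ∧ lstar a r = d) with hG
  -- cover
  have hcover : badF ⊆ F0 ∪ (Finset.Icc 1 N).biUnion G := by
    intro r hr
    by_cases hdvd : r ∣ a
    · exact Finset.mem_union_left _ (Finset.mem_filter.mpr ⟨hr, hdvd⟩)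
    · apply Finset.mem_union_right
      obtain ⟨hrp, hrz, hrl, hrN⟩ := hbad r hr
      have h20 : (20:ℝ) < r := by linarith
      have hdpos := lstar_pos ha hrp hdvd
      have hd2 := (bad_prime_facts ha hrp h20 hrl hdvd).1
      have hdr : lstar a r < r := by
        have h1 : ((lstar a r : ℕ):ℝ) < r := by nlinarith [(by positivity : (0:ℝ) ≤ (lstar a r:ℝ))]
        exact_mod_cast h1
      refine Finset.mem_biUnion.mpr ⟨lstar a r, Finset.mem_Icc.mpr ⟨hdpos, by omega⟩, ?_⟩
      exact Finset.mem_filter.mpr ⟨hr, hdvd, rfl⟩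
  have hnonneg : ∀ r ∈ F0 ∪ (Finset.Icc 1 N).biUnion G, (0:ℝ) ≤ 1/(r:ℝ) := by
    intro r _; positivity
  have hdisj : Disjoint F0 ((Finset.Icc 1 N).biUnion G) := by
    rw [Finset.disjoint_left]
    intro r hr1 hr2
    obtain ⟨d, _, hd⟩ := Finset.mem_biUnion.mp hr2
    exact (Finset.mem_filter.mp hd).2.1 (Finset.mem_filter.mp hr1).2
  have hpd : (↑(Finset.Icc 1 N) : Set ℕ).PairwiseDisjoint G := by
    intro d1 _ d2 _ hne
    rw [Function.onFun, Finset.disjoint_left]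
    intro r h1 h2
    exact hne ((Finset.mem_filter.mp h1).2.2 ▸ (Finset.mem_filter.mp h2).2.2)
  -- sum over F0
  have hF0sum : ∑ r ∈ F0, (1:ℝ)/r ≤ Real.log a / Real.log z := by
    have hcard : (F0.card : ℝ) * Real.log z ≤ Real.log a := by
      apply count_lemma F0 a (by omega) z (by linarith)
      intro r hr
      have hr' := Finset.mem_filter.mp hr
      obtain ⟨hrp, hrz, _, _⟩ := hbad r hr'.1
      exact ⟨hrp, hr'.2, hrz⟩
    have hsum : ∑ r ∈ F0, (1:ℝ)/r ≤ F0.card • (1:ℝ) := by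
      apply Finset.sum_le_card_nsmul
      intro r hr
      have := (hfact r (Finset.mem_filter.mp hr).1).1
      rw [div_le_one (by linarith)]
      linarith
    rw [nsmul_eq_mul, mul_one] at hsum
    calc ∑ r ∈ F0, (1:ℝ)/r ≤ F0.card := hsum
      _ ≤ Real.log a / Real.log z := by
          rw [le_div_iff₀ hlogzpos]
          exact hcard
  -- per-d bounds
  have hGd : ∀ d ∈ Finset.Icc 1 N, ∀ r ∈ G d, r.Prime ∧ r ∣ a^d - 1 ∧ z < r ∧
      ((d:ℝ)^2 < r) ∧ (4 * (d:ℝ)^2 * (Real.log d)^2 < r) := by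
    intro d _ r hr
    obtain ⟨hrb, hnd, hld⟩ := Finset.mem_filter.mp hr
    obtain ⟨hrp, hrz, hrl, _⟩ := hbad r hrb
    have h20 : (20:ℝ) < r := by linarith
    have hfacts := bad_prime_facts ha hrp h20 hrl hnd
    refine ⟨hrp, ?_, hrz, ?_, ?_⟩
    · rw [← hld]; exact lstar_dvd ha hrp hnd
    · rw [← hld]; exact hfacts.1
    · rw [← hld]; exact hfacts.2
  have hane : ∀ d : ℕ, 1 ≤ d → a^d - 1 ≠ 0 := by
    intro d hd
    have : 2 ≤ a^d := by calc 2 ≤ a := ha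
                              _ = a^1 := (pow_one a).symm
                              _ ≤ a^d := Nat.pow_le_pow_right (by omega) hd
    omega
  have hlogad : ∀ d : ℕ, 1 ≤ d → Real.log (↑(a^d - 1)) ≤ d * Real.log a := by
    intro d hd
    have hpos : (0:ℝ) < ↑(a^d - 1) := by exact_mod_cast Nat.pos_of_ne_zero (hane d hd)
    have hle2 : ((a^d - 1 : ℕ):ℝ) ≤ ((a^d : ℕ):ℝ) := by exact_mod_cast Nat.sub_le _ _
    calc Real.log (↑(a^d - 1)) ≤ Real.log (↑(a^d)) := Real.log_le_log hpos hle2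
      _ = d * Real.log a := by push_cast [Real.log_pow]; ring
  -- regime A bound
  have hregA : ∀ d ∈ Finset.Icc 1 N, d ≤ M →
      ∑ r ∈ G d, (1:ℝ)/r ≤ (d:ℝ) * (Real.log a / (z * Real.log z)) := by
    intro d hd hdM
    have hd1 : 1 ≤ d := (Finset.mem_Icc.mp hd).1
    have hcard : ((G d).card : ℝ) * Real.log z ≤ (d:ℝ) * Real.log a := by
      calc ((G d).card : ℝ) * Real.log z ≤ Real.log (↑(a^d - 1)) := by
            apply count_lemma _ _ (hane d hd1) _ (by linarith)
            intro r hr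
            obtain ⟨h1, h2, h3, _, _⟩ := hGd d hd r hr
            exact ⟨h1, h2, h3⟩
        _ ≤ (d:ℝ) * Real.log a := hlogad d hd1
    have hsum : ∑ r ∈ G d, (1:ℝ)/r ≤ (G d).card • (1/z) := by
      apply Finset.sum_le_card_nsmul
      intro r hr
      obtain ⟨_, _, h3, _, _⟩ := hGd d hd r hr
      apply one_div_le_one_div_of_le hzpos h3.le
    rw [nsmul_eq_mul] at hsum
    have hcard' : ((G d).card : ℝ) ≤ (d:ℝ) * Real.log a / Real.log z := by
      rw [le_div_iff₀ hlogzpos]; exact hcard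
    calc ∑ r ∈ G d, (1:ℝ)/r ≤ ((G d).card : ℝ) * (1/z) := hsum
      _ ≤ ((d:ℝ) * Real.log a / Real.log z) * (1/z) := by
          apply mul_le_mul_of_nonneg_right hcard' (by positivity)
      _ = (d:ℝ) * (Real.log a / (z * Real.log z)) := by field_simp
  -- regime B bound
  have hregB : ∀ d ∈ Finset.Icc 1 N, M < d →
      ∑ r ∈ G d, (1:ℝ)/r ≤ (Real.log a / 8) * (1 / ((d:ℝ) * (Real.log d)^3)) := by
    intro d hd hdM
    have hd5 : 5 ≤ d := by omega
    have hd5' : (5:ℝ) ≤ d := by exact_mod_cast hd5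
    have hlogd : 0 < Real.log d := Real.log_pos (by linarith)
    have hcard : ((G d).card : ℝ) * (2 * Real.log d) ≤ (d:ℝ) * Real.log a := by
      have h1 : ((G d).card : ℝ) * Real.log ((d:ℝ)^2) ≤ Real.log (↑(a^d - 1)) := by
        apply count_lemma _ _ (hane d (by omega)) _ (by nlinarith)
        intro r hr
        obtain ⟨h1, h2, _, h4, _⟩ := hGd d hd r hr
        exact ⟨h1, h2, h4⟩
      rw [Real.log_pow, Nat.cast_ofNat] at h1
      calc ((G d).card : ℝ) * (2 * Real.log d) ≤ Real.log (↑(a^d - 1)) := h1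
        _ ≤ (d:ℝ) * Real.log a := hlogad d (by omega)
    have hsum : ∑ r ∈ G d, (1:ℝ)/r ≤ (G d).card • (1/(4 * (d:ℝ)^2 * (Real.log d)^2)) := by
      apply Finset.sum_le_card_nsmul
      intro r hr
      obtain ⟨_, _, _, _, h5⟩ := hGd d hd r hr
      apply one_div_le_one_div_of_le (by positivity) h5.le
    rw [nsmul_eq_mul] at hsum
    have hcard' : ((G d).card : ℝ) ≤ (d:ℝ) * Real.log a / (2 * Real.log d) := by
      rw [le_div_iff₀ (by positivity)]; exact hcard
    calc ∑ r ∈ G d, (1:ℝ)/r ≤ ((G d).card : ℝ) * (1/(4 * (d:ℝ)^2 * (Real.log d)^2)) := hsum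
      _ ≤ ((d:ℝ) * Real.log a / (2 * Real.log d)) * (1/(4 * (d:ℝ)^2 * (Real.log d)^2)) := by
          apply mul_le_mul_of_nonneg_right hcard' (by positivity)
      _ = (Real.log a / 8) * (1 / ((d:ℝ) * (Real.log d)^3)) := by
          field_simp
          ring
  -- assemble
  have hmain : ∑ r ∈ badF, (1:ℝ)/r ≤
      ∑ r ∈ F0, (1:ℝ)/r + ∑ d ∈ Finset.Icc 1 N, ∑ r ∈ G d, (1:ℝ)/r := by
    calc ∑ r ∈ badF, (1:ℝ)/r ≤ ∑ r ∈ F0 ∪ (Finset.Icc 1 N).biUnion G, (1:ℝ)/r :=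
          Finset.sum_le_sum_of_subset_of_nonneg hcover (fun i hi _ => by positivity)
      _ = ∑ r ∈ F0, (1:ℝ)/r + ∑ r ∈ (Finset.Icc 1 N).biUnion G, (1:ℝ)/r :=
          Finset.sum_union hdisj
      _ = ∑ r ∈ F0, (1:ℝ)/r + ∑ d ∈ Finset.Icc 1 N, ∑ r ∈ G d, (1:ℝ)/r := by
          rw [Finset.sum_biUnion hpd]
  -- split the d-sum
  have hsplit : ∑ d ∈ Finset.Icc 1 N, ∑ r ∈ G d, (1:ℝ)/r ≤
      Real.log a / Real.log z + 2 * Real.log a / Real.log z := by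
    rw [← Finset.sum_filter_add_sum_filter_not (Finset.Icc 1 N) (· ≤ M)
      (fun d => ∑ r ∈ G d, (1:ℝ)/r)]
    have hA : ∑ d ∈ (Finset.Icc 1 N).filter (· ≤ M), ∑ r ∈ G d, (1:ℝ)/r ≤
        Real.log a / Real.log z := by
      have h1 : ∑ d ∈ (Finset.Icc 1 N).filter (· ≤ M), ∑ r ∈ G d, (1:ℝ)/r ≤
          ∑ d ∈ (Finset.Icc 1 N).filter (· ≤ M), (d:ℝ) * (Real.log a / (z * Real.log z)) := by
        apply Finset.sum_le_sum
        intro d hd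
        have hd' := Finset.mem_filter.mp hd
        exact hregA d hd'.1 hd'.2
      have h2 : ∑ d ∈ (Finset.Icc 1 N).filter (· ≤ M), (d:ℝ) * (Real.log a / (z * Real.log z))
          ≤ (M:ℝ)^2 * (Real.log a / (z * Real.log z)) := by
        rw [← Finset.sum_mul]
        apply mul_le_mul_of_nonneg_right _ (by positivity)
        calc ∑ d ∈ (Finset.Icc 1 N).filter (· ≤ M), (d:ℝ)
            ≤ ((Finset.Icc 1 N).filter (· ≤ M)).card • (M:ℝ) := by
              apply Finset.sum_le_card_nsmul
              intro d hd
              exact_mod_cast (Finset.mem_filter.mp hd).2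
          _ ≤ (M:ℝ)^2 := by
              rw [nsmul_eq_mul]
              have hcard : ((Finset.Icc 1 N).filter (· ≤ M)).card ≤ M := by
                calc ((Finset.Icc 1 N).filter (· ≤ M)).card ≤ (Finset.Icc 1 M).card := by
                      apply Finset.card_le_card
                      intro d hd
                      have hd' := Finset.mem_filter.mp hd
                      exact Finset.mem_Icc.mpr ⟨(Finset.mem_Icc.mp hd'.1).1, hd'.2⟩
                  _ = M := by rw [Nat.card_Icc]; omega
              have : (((Finset.Icc 1 N).filter (· ≤ M)).card : ℝ) ≤ (M:ℝ) := by
                exact_mod_cast hcard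
              nlinarith [(by positivity : (0:ℝ) ≤ (M:ℝ))]
      calc ∑ d ∈ (Finset.Icc 1 N).filter (· ≤ M), ∑ r ∈ G d, (1:ℝ)/r
          ≤ (M:ℝ)^2 * (Real.log a / (z * Real.log z)) := le_trans h1 h2
        _ ≤ z * (Real.log a / (z * Real.log z)) := by
            apply mul_le_mul_of_nonneg_right hMz (by positivity)
        _ = Real.log a / Real.log z := by field_simp
    have hB : ∑ d ∈ (Finset.Icc 1 N).filter (fun d => ¬ d ≤ M), ∑ r ∈ G d, (1:ℝ)/r ≤
        2 * Real.log a / Real.log z := by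
      have h1 : ∑ d ∈ (Finset.Icc 1 N).filter (fun d => ¬ d ≤ M), ∑ r ∈ G d, (1:ℝ)/r ≤
          ∑ d ∈ (Finset.Icc 1 N).filter (fun d => ¬ d ≤ M),
            (Real.log a / 8) * (1 / ((d:ℝ) * (Real.log d)^3)) := by
        apply Finset.sum_le_sum
        intro d hd
        have hd' := Finset.mem_filter.mp hd
        exact hregB d hd'.1 (by omega)
      have h2 : ∑ d ∈ (Finset.Icc 1 N).filter (fun d => ¬ d ≤ M),
            (Real.log a / 8) * (1 / ((d:ℝ) * (Real.log d)^3)) ≤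
          (Real.log a / 8) * ∑ d ∈ Finset.Ico (M+1) (N+1), (1 / ((d:ℝ) * (Real.log d)^3)) := by
        rw [← Finset.mul_sum]
        apply mul_le_mul_of_nonneg_left _ (by positivity)
        apply Finset.sum_le_sum_of_subset_of_nonneg
        · intro d hd
          have hd' := Finset.mem_filter.mp hd
          have := Finset.mem_Icc.mp hd'.1
          exact Finset.mem_Ico.mpr ⟨by omega, by omega⟩
        · intro d hd _
          have hd5 : 5 ≤ d := by
            have := Finset.mem_Ico.mp hd
            omega
          have : (1:ℝ) < d := by exact_mod_cast (by omega : 1 < d)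
          have := Real.log_pos this
          positivity
      have h3 : ∑ d ∈ Finset.Ico (M+1) (N+1), (1 / ((d:ℝ) * (Real.log d)^3)) ≤
          4 / (Real.log ((M:ℝ)+1))^2 := by
        have ht := telescope (M+1) (by omega) (N+1)
        have hc : ((M+1 : ℕ):ℝ) = (M:ℝ)+1 := by push_cast; ring
        rwa [hc] at ht
      have hlogM : Real.log z / 2 ≤ Real.log ((M:ℝ)+1) := by
        have h4 : Real.sqrt z ≤ (M:ℝ)+1 := (Nat.lt_floor_add_one (Real.sqrt z)).le
        calc Real.log z / 2 = Real.log (Real.sqrt z) := (Real.log_sqrt hzpos.le).symm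
          _ ≤ Real.log ((M:ℝ)+1) := Real.log_le_log (Real.sqrt_pos.mpr hzpos) h4
      have hlogM' : 0 < Real.log ((M:ℝ)+1) := by linarith
      have h5 : 4 / (Real.log ((M:ℝ)+1))^2 ≤ 16 / (Real.log z)^2 := by
        rw [div_le_div_iff₀ (by positivity) (by positivity)]
        nlinarith
      calc ∑ d ∈ (Finset.Icc 1 N).filter (fun d => ¬ d ≤ M), ∑ r ∈ G d, (1:ℝ)/r
          ≤ (Real.log a / 8) * ∑ d ∈ Finset.Ico (M+1) (N+1), (1 / ((d:ℝ) * (Real.log d)^3)) :=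
            le_trans h1 h2
        _ ≤ (Real.log a / 8) * (4 / (Real.log ((M:ℝ)+1))^2) :=
            mul_le_mul_of_nonneg_left h3 (by positivity)
        _ ≤ (Real.log a / 8) * (16 / (Real.log z)^2) := by
            apply mul_le_mul_of_nonneg_left h5 (by positivity)
        _ = 2 * Real.log a / (Real.log z)^2 := by ring
        _ ≤ 2 * Real.log a / Real.log z := by
            apply div_le_div_of_nonneg_left (by positivity) hlogzpos
            nlinarith
    linarith
  calc ∑ r ∈ badF, (1:ℝ)/r ≤
      ∑ r ∈ F0, (1:ℝ)/r + ∑ d ∈ Finset.Icc 1 N, ∑ r ∈ G d, (1:ℝ)/r := hmain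
    _ ≤ Real.log a / Real.log z + (Real.log a / Real.log z + 2 * Real.log a / Real.log z) := by
        linarith
    _ = 4 * Real.log a / Real.log z := by ring

theorem stmt2 (a : ℕ) (ha : 1 < a) :
    ∃ C : ℝ, ∀ᶠ X : ℝ in atTop, ∀ z : ℝ,
      Real.log (Real.log X) ≤ z → z ≤ X →
      (Nat.card {n : ℕ | 0 < n ∧ (n : ℝ) ≤ X ∧ ∃ r : ℕ, r.Prime ∧ r ∣ n ∧
          z < (r : ℝ) ∧ (lstar a r : ℝ) < Real.sqrt r / Real.log r} : ℝ) ≤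
        C * X / Real.log z := by
  classical
  refine ⟨4 * Real.log a, ?_⟩
  filter_upwards [eventually_ge_atTop (Real.exp (Real.exp 20))] with X hX
  intro z hz1 hz2
  have hXpos : (0:ℝ) < X := lt_of_lt_of_le (Real.exp_pos _) hX
  have hlogX : Real.exp 20 ≤ Real.log X := by
    rw [Real.le_log_iff_exp_le hXpos]
    exact hX
  have hz20 : (20:ℝ) ≤ z := by
    have h1 : (20:ℝ) ≤ Real.log (Real.log X) := by
      rw [Real.le_log_iff_exp_le (lt_of_lt_of_le (Real.exp_pos _) hlogX)]
      exact hlogX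
    linarith
  have hzpos : (0:ℝ) < z := by linarith
  have hlogz : 1 ≤ Real.log z := by
    rw [Real.le_log_iff_exp_le hzpos]
    calc Real.exp 1 ≤ 2.7182818286 := Real.exp_one_lt_d9.le
      _ ≤ z := by linarith
  have hlogzpos : (0:ℝ) < Real.log z := by linarith
  set N : ℕ := ⌊X⌋₊ with hN
  set P : ℕ → Prop := fun r => r.Prime ∧ z < (r:ℝ) ∧
    (lstar a r : ℝ) < Real.sqrt r / Real.log r with hP
  set badF : Finset ℕ := (Finset.Ioc 0 N).filter P with hbadF
  set T : Finset ℕ := (Finset.Ioc 0 N).filter (fun n => ∃ r, P r ∧ r ∣ n) with hT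
  set S : Set ℕ := {n : ℕ | 0 < n ∧ (n : ℝ) ≤ X ∧ ∃ r : ℕ, r.Prime ∧ r ∣ n ∧
      z < (r : ℝ) ∧ (lstar a r : ℝ) < Real.sqrt r / Real.log r} with hS
  -- S ⊆ T
  have hsub : S ⊆ (T : Set ℕ) := by
    intro n hn
    obtain ⟨hn0, hnX, r, hrp, hrd, hrz, hrl⟩ := hn
    simp only [hT, Finset.coe_filter, Set.mem_setOf_eq, Finset.mem_Ioc]
    exact ⟨⟨hn0, Nat.le_floor hnX⟩, r, ⟨hrp, hrz, hrl⟩, hrd⟩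
  have hcard1 : (Nat.card S : ℝ) ≤ (T.card : ℝ) := by
    have h1 : Nat.card S ≤ Nat.card (T : Set ℕ) := Nat.card_mono T.finite_toSet hsub
    have h2 : Nat.card (T : Set ℕ) = T.card := by
      rw [Nat.card_coe_set_eq, Set.ncard_coe_finset]
    rw [h2] at h1
    exact_mod_cast h1
  -- T covered by multiples
  have hTsub : T ⊆ badF.biUnion (fun r => (Finset.Ioc 0 N).filter (r ∣ ·)) := by
    intro n hn
    obtain ⟨hnI, r, hPr, hrd⟩ := Finset.mem_filter.mp hn
    have hn0 : 0 < n := (Finset.mem_Ioc.mp hnI).1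
    have hnN : n ≤ N := (Finset.mem_Ioc.mp hnI).2
    apply Finset.mem_biUnion.mpr
    refine ⟨r, ?_, ?_⟩
    · apply Finset.mem_filter.mpr
      refine ⟨Finset.mem_Ioc.mpr ⟨hPr.1.pos, le_trans (Nat.le_of_dvd hn0 hrd) hnN⟩, hPr⟩
    · exact Finset.mem_filter.mpr ⟨hnI, hrd⟩
  have hcard2 : (T.card : ℝ) ≤ ∑ r ∈ badF, ((N / r : ℕ) : ℝ) := by
    have h1 : T.card ≤ ∑ r ∈ badF, ((Finset.Ioc 0 N).filter (r ∣ ·)).card :=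
      le_trans (Finset.card_le_card hTsub) (Finset.card_biUnion_le)
    have h2 : ∀ r ∈ badF, ((Finset.Ioc 0 N).filter (r ∣ ·)).card = N / r := by
      intro r _
      exact Nat.Ioc_filter_dvd_card_eq_div N r
    rw [Finset.sum_congr rfl h2] at h1
    exact_mod_cast h1
  -- multiples count to X/r
  have hcard3 : ∑ r ∈ badF, ((N / r : ℕ) : ℝ) ≤ X * ∑ r ∈ badF, (1:ℝ)/r := by
    rw [Finset.mul_sum]
    apply Finset.sum_le_sum
    intro r hr
    have hr' := Finset.mem_filter.mp hr
    have hr0 : 0 < r := (Finset.mem_Ioc.mp hr'.1).1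
    have hr0' : (0:ℝ) < r := by exact_mod_cast hr0
    calc ((N / r : ℕ) : ℝ) ≤ (N:ℝ) / r := Nat.cast_div_le
      _ ≤ X / r := by
          gcongr
          exact Nat.floor_le hXpos.le
      _ = X * (1/r) := by ring
  -- final
  have hbad : ∀ r ∈ badF, r.Prime ∧ z < (r:ℝ) ∧
      (lstar a r : ℝ) < Real.sqrt r / Real.log r ∧ r ≤ N := by
    intro r hr
    have hr' := Finset.mem_filter.mp hr
    exact ⟨hr'.2.1, hr'.2.2.1, hr'.2.2.2, (Finset.mem_Ioc.mp hr'.1).2⟩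
  have hsum := sum_bound a ha z hz20 N badF hbad
  calc (Nat.card S : ℝ) ≤ (T.card : ℝ) := hcard1
    _ ≤ ∑ r ∈ badF, ((N / r : ℕ) : ℝ) := hcard2
    _ ≤ X * ∑ r ∈ badF, (1:ℝ)/r := hcard3
    _ ≤ X * (4 * Real.log a / Real.log z) := by
        apply mul_le_mul_of_nonneg_left hsum hXpos.le
    _ = 4 * Real.log a * X / Real.log z := by ring
end

section
/- Let a > 1 be an integer, n a positive integer, and q a prime with q > a. If q divides λ(n)/ℓ*_a(n), then either q² divides n, or n is divisible by some prime r with r > q, r ≡ 1 (mod q), and a^((r−1)/q) ≡ 1 (mod r). -/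
/-- Carmichael's function: the exponent of the multiplicative group `(ℤ/nℤ)ˣ`. -/
noncomputable def carmichael (n : ℕ) : ℕ :=
  Monoid.exponent (ZMod n)ˣ

lemma coprimePart_spec (a n : ℕ) (hn : 0 < n) :
    coprimePart a n ∣ n ∧ Nat.Coprime (coprimePart a n) a ∧
      ∀ d, d ∣ n → Nat.Coprime d a → d ∣ coprimePart a n := by
  classical
  set s := n.divisors.filter fun d => Nat.Coprime d a with hs
  have hmem : ∀ d ∈ s, d ∣ n ∧ Nat.Coprime d a := by
    intro d hd
    rw [hs, Finset.mem_filter, Nat.mem_divisors] at hd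
    exact ⟨hd.1.1, hd.2⟩
  have hmem' : ∀ d, d ∣ n → Nat.Coprime d a → d ∈ s := by
    intro d h1 h2
    rw [hs, Finset.mem_filter, Nat.mem_divisors]
    exact ⟨⟨h1, hn.ne'⟩, h2⟩
  have h1 : (1 : ℕ) ∈ s := hmem' 1 (one_dvd n) (Nat.coprime_one_left a)
  have hne : s.Nonempty := ⟨1, h1⟩
  set L := s.lcm id with hL
  have hLn : L ∣ n := Finset.lcm_dvd fun d hd => (hmem d hd).1
  have hLa : Nat.Coprime L a := by
    have hprod : L ∣ ∏ d ∈ s, d :=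
      Finset.lcm_dvd fun d hd => Finset.dvd_prod_of_mem _ hd
    have hcop : Nat.Coprime (∏ d ∈ s, d) a :=
      Nat.Coprime.prod_left fun d hd => (hmem d hd).2
    exact Nat.Coprime.coprime_dvd_left hprod hcop
  have hLs : L ∈ s := hmem' L hLn hLa
  obtain ⟨M, hMs, hM⟩ := Finset.exists_mem_eq_sup s hne id
  have hMeq : coprimePart a n = M := hM
  have hL0 : 0 < L := Nat.pos_of_dvd_of_pos hLn hn
  have hML : M ∣ L := Finset.dvd_lcm hMs
  have hLM : L ≤ M := by
    have := Finset.le_sup (f := id) hLs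
    rwa [hM] at this
  have hMLeq : M = L := le_antisymm (Nat.le_of_dvd hL0 hML) hLM
  refine ⟨?_, ?_, ?_⟩
  · rw [hMeq, hMLeq]; exact hLn
  · rw [hMeq, hMLeq]; exact hLa
  · intro d h1 h2
    rw [hMeq, hMLeq]
    exact Finset.dvd_lcm (hmem' d h1 h2)

lemma dvd_div_of_lt_factorization {q d D : ℕ} (hq : q.Prime) (hD : D ≠ 0) (hqD : q ∣ D)
    (hd : d ∣ D) (hlt : d.factorization q < D.factorization q) : d ∣ D / q := by
  have hd0 : d ≠ 0 := fun h => hD (zero_dvd_iff.mp (h ▸ hd))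
  have hDq0 : D / q ≠ 0 := by
    have := Nat.div_pos (Nat.le_of_dvd (Nat.pos_of_ne_zero hD) hqD) hq.pos
    omega
  rw [← Nat.factorization_le_iff_dvd hd0 hDq0]
  have hle := (Nat.factorization_le_iff_dvd hd0 hD).mpr hd
  intro p
  rw [Nat.factorization_div hqD, hq.factorization]
  simp only [Finsupp.tsub_apply, Finsupp.single_apply]
  by_cases hpq : q = p
  · subst hpq; simpa using by omega
  · simp only [hpq, if_false, Nat.sub_zero]
    exact hle p

lemma cast_eq_one_of_forall (n w : ℕ) (hn : n ≠ 0)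
    (h : ∀ p ∈ n.primeFactors, (w : ZMod (p ^ n.factorization p)) = 1) :
    (w : ZMod n) = 1 := by
  have key : ∀ M : ℕ, ((w : ZMod M) = 1 ↔ (M : ℤ) ∣ (w : ℤ) - 1) := by
    intro M
    rw [show (1 : ZMod M) = ((1 : ℕ) : ZMod M) by simp, ZMod.natCast_eq_natCast_iff,
      Nat.modEq_iff_dvd]
    constructor
    · intro hdvd
      have := hdvd.neg_right
      simpa using this
    · intro hdvd
      have := hdvd.neg_right
      simpa using this
  rw [key]
  have h' : ∀ p ∈ n.primeFactors, ((p ^ n.factorization p : ℕ) : ℤ) ∣ (w : ℤ) - 1 := by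
    intro p hp
    rw [← key] ; exact h p hp
  by_cases hw1 : (w : ℤ) - 1 = 0
  · simp [hw1]
  set y := ((w : ℤ) - 1).natAbs with hy
  have hy0 : y ≠ 0 := fun hc => hw1 (Int.natAbs_eq_zero.mp hc)
  have hdvd : n ∣ y := by
    rw [← Nat.factorization_le_iff_dvd hn hy0]
    intro p
    by_cases hp : p ∈ n.primeFactors
    · have hpy : p ^ n.factorization p ∣ y := by
        have := h' p hp
        rw [← Int.dvd_natAbs, ← hy] at this
        exact_mod_cast this
      exact ((Nat.prime_of_mem_primeFactors hp).pow_dvd_iff_le_factorization hy0).mp hpy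
    · have : n.factorization p = 0 := by
        rwa [← Finsupp.notMem_support_iff, Nat.support_factorization]
      simp [this]
  have : (n : ℤ) ∣ (w : ℤ) - 1 := by
    rw [← Int.dvd_natAbs, ← hy]
    exact_mod_cast hdvd
  exact this

theorem stmt5 (a n q : ℕ) (ha : 1 < a) (hn : 0 < n) (hq : q.Prime) (haq : a < q)
    (hdvd : q ∣ carmichael n / lstar a n) :
    q ^ 2 ∣ n ∨ ∃ r : ℕ, r.Prime ∧ r ∣ n ∧ q < r ∧ r % q = 1 ∧
      (a : ZMod r) ^ ((r - 1) / q) = 1 := by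
  classical
  haveI : NeZero n := ⟨hn.ne'⟩
  obtain ⟨hmn, hma, hmax⟩ := coprimePart_spec a n hn
  set m := coprimePart a n with hm
  set ℓ := lstar a n with hℓdef
  set L := carmichael n with hLdef
  have ham : Nat.Coprime a m := Nat.Coprime.symm hma
  have hunit : IsUnit ((a : ℕ) : ZMod m) := (ZMod.isUnit_iff_coprime a m).mpr ham
  obtain ⟨ua, hua⟩ := hunit
  have hℓu : ℓ = orderOf ua := by
    rw [hℓdef, lstar, ← hm, ← hua, orderOf_units]
  have hexp : Monoid.exponent (ZMod m)ˣ ∣ Monoid.exponent (ZMod n)ˣ :=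
    MonoidHom.exponent_dvd (ZMod.unitsMap_surjective hmn)
  have hℓL : ℓ ∣ L := by
    rw [hℓu, hLdef, carmichael]
    exact (Monoid.order_dvd_exponent ua).trans hexp
  have hL0 : L ≠ 0 := by
    rw [hLdef, carmichael]; exact Monoid.exponent_ne_zero_of_finite
  have hℓ0 : ℓ ≠ 0 := fun h => hL0 (Nat.eq_zero_of_zero_dvd (h ▸ hℓL))
  have hqℓL : q * ℓ ∣ L := by
    obtain ⟨c, hc⟩ := hdvd
    refine ⟨c, ?_⟩
    rw [← Nat.div_mul_cancel hℓL, hc]; ring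
  set k := ℓ.factorization q with hk
  have hqk1L : q ^ (k + 1) ∣ L :=
    (show q ^ (k + 1) = q * q ^ k by ring) ▸
      ((mul_dvd_mul_left q (Nat.ordProj_dvd ℓ q)).trans hqℓL)
  have hkL : k + 1 ≤ L.factorization q :=
    (hq.pow_dvd_iff_le_factorization hL0).mp hqk1L
  have hqL : q ∣ L := (dvd_mul_right q ℓ).trans hqℓL
  set T := L / q with hT
  have hTL : ¬ L ∣ T := by
    intro h
    have hT0 : T ≠ 0 := by
      have := Nat.div_pos (Nat.le_of_dvd (Nat.pos_of_ne_zero hL0) hqL) hq.pos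
      omega
    have h1 := Nat.le_of_dvd (Nat.pos_of_ne_zero hT0) h
    have h2 : T < L := Nat.div_lt_self (Nat.pos_of_ne_zero hL0) hq.one_lt
    omega
  have hnot : ¬ ∀ g : (ZMod n)ˣ, g ^ T = 1 := fun h =>
    hTL (by rw [hLdef, carmichael]; exact Monoid.exponent_dvd_of_forall_pow_eq_one h)
  push_neg at hnot
  obtain ⟨u, hu⟩ := hnot
  set v := (u : ZMod n).val with hv
  set w := v ^ T with hw
  have hval : ((v : ℕ) : ZMod n) = (u : ZMod n) := by
    rw [hv, ZMod.natCast_val, ZMod.cast_id]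
  have hwn : ((w : ℕ) : ZMod n) = ((u : ZMod n)) ^ T := by
    rw [hw, Nat.cast_pow, hval]
  have hwne : ((w : ℕ) : ZMod n) ≠ 1 := by
    rw [hwn]
    intro h
    exact hu (Units.val_eq_one.mp (by rw [Units.val_pow_eq_pow_val]; exact h))
  obtain ⟨r, hr_mem, hrne⟩ : ∃ p ∈ n.primeFactors, ((w : ℕ) : ZMod (p ^ n.factorization p)) ≠ 1 := by
    by_contra hcon
    push_neg at hcon
    exact hwne (cast_eq_one_of_forall n w hn.ne' hcon)
  have hr : r.Prime := Nat.prime_of_mem_primeFactors hr_mem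
  have hrn : r ∣ n := Nat.dvd_of_mem_primeFactors hr_mem
  set e := n.factorization r with he
  have he1 : 1 ≤ e := hr.factorization_pos_of_dvd hn.ne' hrn
  have hren : r ^ e ∣ n := Nat.ordProj_dvd n r
  haveI : NeZero (r ^ e) := ⟨pow_ne_zero e hr.pos.ne'⟩
  set g := ZMod.unitsMap hren u with hg
  have hgw : ((g : ZMod (r ^ e))) ^ T = ((w : ℕ) : ZMod (r ^ e)) := by
    rw [hg, ZMod.unitsMap_def, Units.coe_map]
    show (ZMod.castHom hren (ZMod (r ^ e)) (u : ZMod n)) ^ T = _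
    rw [← hval, map_natCast, hw, Nat.cast_pow]
  have hgT : g ^ T ≠ 1 := by
    intro h
    apply hrne
    rw [← hgw, ← Units.val_pow_eq_pow_val, h, Units.val_one]
  have hdg : ¬ orderOf g ∣ T := fun h => hgT (orderOf_dvd_iff_pow_eq_one.mp h)
  have hdgL : orderOf g ∣ L := by
    rw [hLdef, carmichael]
    exact (orderOf_map_dvd (ZMod.unitsMap hren) u).trans (Monoid.order_dvd_exponent u)
  have hdg0 : orderOf g ≠ 0 := fun h => hL0 (Nat.eq_zero_of_zero_dvd (h ▸ hdgL))
  have hqdg : q ^ (k + 1) ∣ orderOf g := by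
    by_contra hcon
    have h1 : (orderOf g).factorization q < L.factorization q := by
      have h2 : ¬ (k + 1 ≤ (orderOf g).factorization q) := fun h =>
        hcon ((hq.pow_dvd_iff_le_factorization hdg0).mpr h)
      omega
    exact hdg (dvd_div_of_lt_factorization hq hL0 hqL hdgL h1)
  have hcard : orderOf g ∣ r ^ (e - 1) * (r - 1) := by
    have h1 : orderOf g ∣ Fintype.card (ZMod (r ^ e))ˣ := orderOf_dvd_card
    rwa [ZMod.card_units_eq_totient, Nat.totient_prime_pow hr he1] at h1
  have hqprod : q ^ (k + 1) ∣ r ^ (e - 1) * (r - 1) := hqdg.trans hcard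
  by_cases hrq : r = q
  · subst hrq
    rcases Nat.lt_or_ge e 2 with h2 | h2
    · exfalso
      have he' : e = 1 := by omega
      rw [he', pow_zero, one_mul] at hqprod
      have hq1 : r ∣ r - 1 := (dvd_pow_self r (Nat.succ_ne_zero k)).trans hqprod
      have := Nat.le_of_dvd (by have := hq.two_le; omega) hq1
      have := hq.two_le
      omega
    · left
      exact (pow_dvd_pow r h2).trans hren
  · right
    have hco : Nat.Coprime (q ^ (k + 1)) (r ^ (e - 1)) :=
      ((Nat.coprime_primes hq hr).mpr (Ne.symm hrq)).pow _ _
    have hq_r1 : q ^ (k + 1) ∣ r - 1 := by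
      rw [mul_comm] at hqprod
      exact hco.dvd_of_dvd_mul_right hqprod
    have hq1 : q ∣ r - 1 := (dvd_pow_self q (Nat.succ_ne_zero k)).trans hq_r1
    have hr2 : 2 ≤ r := hr.two_le
    have hq2 : 2 ≤ q := hq.two_le
    have hrq' : q < r := by
      have := Nat.le_of_dvd (by omega) hq1
      rcases Nat.lt_or_ge q r with h | h
      · exact h
      · omega
    have hmod : r % q = 1 := by
      obtain ⟨c, hc⟩ := hq1
      have hrc : r = 1 + q * c := by omega
      rw [hrc, Nat.add_mul_mod_self_left]
      exact Nat.mod_eq_of_lt (by omega)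
    have hra : ¬ r ∣ a := fun h => by
      have := Nat.le_of_dvd (by omega) h; omega
    have hrm : r ∣ m := hmax r hrn ((Nat.Prime.coprime_iff_not_dvd hr).mpr hra)
    haveI : Fact r.Prime := ⟨hr⟩
    have hane : ((a : ℕ) : ZMod r) ≠ 0 := by
      rw [Ne, ZMod.natCast_eq_zero_iff]; exact hra
    set d := orderOf ((a : ℕ) : ZMod r) with hd
    have hdℓ : d ∣ ℓ := by
      have h1 := orderOf_map_dvd (ZMod.castHom hrm (ZMod r)).toMonoidHom ((a : ℕ) : ZMod m)
      simp only [RingHom.toMonoidHom_eq_coe, MonoidHom.coe_coe, map_natCast] at h1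
      rw [hd, hℓdef, lstar, ← hm]
      exact h1
    have hdr1 : d ∣ r - 1 :=
      orderOf_dvd_of_pow_eq_one (ZMod.pow_card_sub_one_eq_one hane)
    have hd0 : d ≠ 0 := fun h => hℓ0 (Nat.eq_zero_of_zero_dvd (h ▸ hdℓ))
    have hr1ne : r - 1 ≠ 0 := by omega
    have hqr1fac : k + 1 ≤ (r - 1).factorization q :=
      (hq.pow_dvd_iff_le_factorization hr1ne).mp hq_r1
    have hdfac : d.factorization q ≤ k := by
      have := (Nat.factorization_le_iff_dvd hd0 hℓ0).mpr hdℓ q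
      rwa [← hk] at this
    have hddvd : d ∣ (r - 1) / q :=
      dvd_div_of_lt_factorization hq hr1ne hq1 hdr1 (by omega)
    exact ⟨r, hr, hrn, hrq', hmod, orderOf_dvd_iff_pow_eq_one.mp hddvd⟩
end

section
/- Let p be a prime and let d and n be positive integers with d dividing n. Then d·ℓ*_p(n) ≤ n·ℓ*_p(d), i.e., d/ℓ*_p(d) ≤ n/ℓ*_p(n). -/
lemma coprimePart_eq (p n : ℕ) (hp : p.Prime) (hn : 0 < n) :
    coprimePart p n = ordCompl[p] n := by
  unfold coprimePart
  apply le_antisymm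
  · apply Finset.sup_le
    intro b hb
    simp only [Finset.mem_filter, Nat.mem_divisors] at hb
    have hcop : Nat.Coprime b (p ^ n.factorization p) := (hb.2.symm.pow_left _).symm
    have hb2 : b ∣ ordCompl[p] n * p ^ n.factorization p := by
      rw [mul_comm, Nat.ordProj_mul_ordCompl_eq_self]
      exact hb.1.1
    exact Nat.le_of_dvd (Nat.ordCompl_pos p hn.ne') (hcop.dvd_of_dvd_mul_right hb2)
  · refine Finset.le_sup (f := id) ?_
    simp only [Finset.mem_filter, Nat.mem_divisors]
    exact ⟨⟨Nat.ordCompl_dvd n p, hn.ne'⟩, (Nat.coprime_ordCompl hp hn.ne').symm⟩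

lemma core (p m e : ℕ) (hm : 0 < m) (hcop : Nat.Coprime p m) (he : e ∣ m) :
    e * orderOf (p : ZMod m) ≤ m * orderOf (p : ZMod e) := by
  have he0 : 0 < e := Nat.pos_of_dvd_of_pos he hm
  haveI : NeZero m := ⟨hm.ne'⟩
  haveI : NeZero e := ⟨he0.ne'⟩
  set f : ZMod m →+* ZMod e := ZMod.castHom he (ZMod e) with hf
  set t := orderOf (p : ZMod e) with htdef
  set T := orderOf (p : ZMod m) with hTdef
  -- t divides T
  have hfp : f ((p : ZMod m)) = (p : ZMod e) := map_natCast f p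
  have htT : t ∣ T := by
    apply orderOf_dvd_of_pow_eq_one
    have h1 : (p : ZMod m) ^ T = 1 := pow_orderOf_eq_one _
    calc (p : ZMod e) ^ T = f ((p : ZMod m) ^ T) := by rw [map_pow, hfp]
    _ = 1 := by rw [h1, map_one]
  -- t positive
  have hcope : Nat.Coprime p e := Nat.Coprime.coprime_dvd_right he hcop
  have ht0 : 0 < t := by
    rw [htdef, ← ZMod.coe_unitOfCoprime p hcope, orderOf_units]
    exact orderOf_pos _
  -- the "kernel" finset
  set Z : Finset (ZMod m) := Finset.univ.filter (fun x => f x = 0) with hZ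
  have hkey : ∀ x : ZMod m, f x = ((x.val : ℕ) : ZMod e) := by
    intro x
    conv_lhs => rw [← ZMod.natCast_rightInverse x]
    rw [map_natCast]
  have hZcard : Z.card = m / e := by
    rw [← Finset.card_range (m / e)]
    apply Finset.card_nbij' (i := fun x => x.val / e)
      (j := fun k => ((e * k : ℕ) : ZMod m))
    · intro x hx
      simp only [hZ, Finset.mem_coe, Finset.mem_filter, Finset.mem_univ, true_and, hkey,
        ZMod.natCast_eq_zero_iff] at hx
      obtain ⟨j, hj⟩ := hx
      have hxm : x.val < m := ZMod.val_lt x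
      beta_reduce
      rw [Finset.mem_coe, Finset.mem_range, hj, Nat.mul_div_cancel_left _ he0]
      have : e * j < e * (m / e) := by rw [Nat.mul_div_cancel' he]; omega
      exact Nat.lt_of_mul_lt_mul_left this
    · intro k _
      simp only [hZ, Finset.mem_coe, Finset.mem_filter, Finset.mem_univ, true_and, hkey,
        ZMod.natCast_eq_zero_iff]
      have : ((e * k : ℕ) : ZMod m).val = (e * k) % m := ZMod.val_natCast _ _
      rw [this]
      exact (Nat.dvd_mod_iff he).mpr (dvd_mul_right e k)
    · intro x hx
      simp only [hZ, Finset.mem_coe, Finset.mem_filter, Finset.mem_univ, true_and, hkey,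
        ZMod.natCast_eq_zero_iff] at hx
      beta_reduce
      rw [Nat.mul_div_cancel' hx]
      exact ZMod.natCast_rightInverse x
    · intro k hk
      rw [Finset.mem_coe, Finset.mem_range] at hk
      have hlt : e * k < m := by
        have : e * k < e * (m / e) := Nat.mul_lt_mul_of_pos_left hk he0
        rwa [Nat.mul_div_cancel' he] at this
      beta_reduce
      rw [ZMod.val_natCast, Nat.mod_eq_of_lt hlt, Nat.mul_div_cancel_left _ he0]
  -- orderOf ((p)^t) ≤ Z.card
  have hle : orderOf ((p : ZMod m) ^ t) ≤ Z.card := by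
    rw [← Finset.card_range (orderOf ((p : ZMod m) ^ t))]
    apply Finset.card_le_card_of_injOn (fun k => (p : ZMod m) ^ (t * k) - 1)
    · intro k hk
      simp only [hZ, Finset.mem_coe, Finset.mem_filter, Finset.mem_univ, true_and]
      rw [map_sub, map_one, map_pow, hfp, pow_mul, pow_orderOf_eq_one, one_pow, sub_self]
    · intro i hi j hj hij
      simp only [Finset.coe_range, Set.mem_Iio] at hi hj
      simp only [sub_left_inj] at hij
      rw [pow_mul, pow_mul] at hij
      exact pow_injOn_Iio_orderOf hi hj hij
  have hTt : orderOf ((p : ZMod m) ^ t) = T / t := orderOf_pow_of_dvd ht0.ne' htT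
  rw [hTt, hZcard] at hle
  calc e * T = e * (t * (T / t)) := by rw [Nat.mul_div_cancel' htT]
    _ ≤ e * (t * (m / e)) := by
        exact Nat.mul_le_mul_left _ (Nat.mul_le_mul_left _ hle)
    _ = t * (e * (m / e)) := by ring
    _ = t * m := by rw [Nat.mul_div_cancel' he]
    _ = m * t := mul_comm _ _

theorem stmt11 (p : ℕ) (hp : p.Prime) (d n : ℕ) (hd : 0 < d) (hn : 0 < n)
    (hdvd : d ∣ n) : d * lstar p n ≤ n * lstar p d := by
  rw [lstar, lstar, coprimePart_eq p n hp hn, coprimePart_eq p d hp hd]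
  set m := ordCompl[p] n
  set e := ordCompl[p] d
  have hm0 : 0 < m := Nat.ordCompl_pos p hn.ne'
  have hcop : Nat.Coprime p m := Nat.coprime_ordCompl hp hn.ne'
  have hem : e ∣ m := Nat.ordCompl_dvd_ordCompl_of_dvd hdvd p
  have hcore := core p m e hm0 hcop hem
  have hab : d.factorization p ≤ n.factorization p := by
    rw [← Nat.Prime.pow_dvd_iff_le_factorization hp hn.ne']
    exact dvd_trans (Nat.ordProj_dvd d p) hdvd
  calc d * orderOf (p : ZMod m)
      = p ^ d.factorization p * (e * orderOf (p : ZMod m)) := by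
        rw [← mul_assoc, Nat.ordProj_mul_ordCompl_eq_self]
    _ ≤ p ^ n.factorization p * (m * orderOf (p : ZMod e)) := by
        exact Nat.mul_le_mul (Nat.pow_le_pow_right hp.pos hab) hcore
    _ = n * orderOf (p : ZMod e) := by
        rw [← mul_assoc, Nat.ordProj_mul_ordCompl_eq_self]
end

section
/- Let p be a prime and let n be a positive integer with increasing sequence of divisors d_1 < d_2 < ⋯ < d_{τ(n)}. Suppose 1 ≤ j < τ(n), and set m = 1 + Σ_{l=1}^{j} φ(d_l). If ℓ*_p(e) > m for every divisor e of n with e > d_j, then x^n − 1 has no divisor of degree m in F_p[x]; in particular, n is not p-practical. -/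
open Polynomial IntermediateField

/-- `n` is `p`-practical if `x^n - 1` has a divisor in `𝔽_p[x]` of every degree
between `1` and `n`. -/
def IsPPractical (p n : ℕ) : Prop :=
  ∀ m : ℕ, 1 ≤ m → m ≤ n → ∃ g : Polynomial (ZMod p), g ∣ X ^ n - 1 ∧ g.natDegree = m

lemma coprimePart_eq_ordCompl {p : ℕ} (hp : p.Prime) {n : ℕ} (hn : n ≠ 0) :
    coprimePart p n = ordCompl[p] n := by
  apply le_antisymm
  · apply Finset.sup_le
    intro d hd
    simp only [Finset.mem_filter, Nat.mem_divisors] at hd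
    obtain ⟨⟨hdn, -⟩, hcop⟩ := hd
    have : d ∣ ordProj[p] n * ordCompl[p] n := by
      rw [Nat.ordProj_mul_ordCompl_eq_self]; exact hdn
    exact Nat.le_of_dvd (Nat.ordCompl_pos p hn) (Nat.Coprime.dvd_of_dvd_mul_left
      (Nat.Coprime.pow_right _ hcop) this)
  · apply Finset.le_sup (f := id)
    simp only [Finset.mem_filter, Nat.mem_divisors]
    exact ⟨⟨Nat.ordCompl_dvd n p, hn⟩, (Nat.coprime_ordCompl hp hn).symm⟩

lemma key {p : ℕ} (hp : p.Prime) [Fact p.Prime] (g : (ZMod p)[X]) (hg : g ≠ 0)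
    (α : AlgebraicClosure (ZMod p)) (hα : α ≠ 0) (hroot : aeval α g = 0) :
    ∃ t : ℕ, 1 ≤ t ∧ t ≤ g.natDegree ∧ orderOf α ∣ p ^ t - 1 := by
  have hint : IsIntegral (ZMod p) α := Algebra.IsIntegral.isIntegral α
  refine ⟨(minpoly (ZMod p) α).natDegree, minpoly.natDegree_pos hint, ?_, ?_⟩
  · exact Polynomial.natDegree_le_of_dvd (minpoly.dvd _ _ hroot) hg
  · set t := (minpoly (ZMod p) α).natDegree with ht
    haveI := IntermediateField.adjoin.finiteDimensional hint
    haveI : Finite ((ZMod p)⟮α⟯) := Module.finite_of_finite (ZMod p)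
    haveI : Fintype ((ZMod p)⟮α⟯) := Fintype.ofFinite _
    have hcard : Fintype.card ((ZMod p)⟮α⟯) = p ^ t := by
      rw [Module.card_eq_pow_finrank (K := ZMod p), ZMod.card,
        IntermediateField.adjoin.finrank hint]
    set β := IntermediateField.AdjoinSimple.gen (ZMod p) α with hβ
    have hβα : algebraMap ((ZMod p)⟮α⟯) (AlgebraicClosure (ZMod p)) β = α :=
      IntermediateField.AdjoinSimple.algebraMap_gen _ _
    have hβ0 : β ≠ 0 := by
      intro h
      apply hα
      rw [← hβα, h, map_zero]
    have h1 : β ^ (p ^ t - 1) = 1 := by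
      rw [← hcard]
      exact FiniteField.pow_card_sub_one_eq_one β hβ0
    have horder : orderOf α = orderOf β := by
      conv_lhs => rw [← hβα]
      exact orderOf_injective (algebraMap ((ZMod p)⟮α⟯)
        (AlgebraicClosure (ZMod p))).toMonoidHom (RingHom.injective _) β
    rw [horder]
    exact orderOf_dvd_of_pow_eq_one h1


lemma coprimePart_pow_mul {p : ℕ} (hp : p.Prime) {e : ℕ} (he : 0 < e)
    (hpe : ¬ p ∣ e) (i : ℕ) : coprimePart p (p ^ i * e) = e := by
  have hppos : 0 < p ^ i := pow_pos hp.pos i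
  rw [coprimePart_eq_ordCompl hp (Nat.mul_pos hppos he).ne']
  have hfac : (p ^ i * e).factorization p = i := by
    rw [Nat.factorization_mul hppos.ne' he.ne', Nat.Prime.factorization_pow hp]
    simp [Nat.factorization_eq_zero_of_not_dvd hpe]
  rw [hfac, Nat.mul_div_cancel_left _ hppos]

lemma lstar_pow_mul {p : ℕ} (hp : p.Prime) {e : ℕ} (he : 0 < e)
    (hpe : ¬ p ∣ e) (i : ℕ) :
    lstar p (p ^ i * e) = orderOf ((p : ℕ) : ZMod e) := by
  unfold lstar
  rw [coprimePart_pow_mul hp he hpe i]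

-- order bound from dvd p^t - 1
lemma order_le_of_dvd {p e t : ℕ} (hp : p.Prime) (ht : 1 ≤ t)
    (hdvd : e ∣ p ^ t - 1) : orderOf ((p : ℕ) : ZMod e) ≤ t ∧ ¬ p ∣ e ∧ 0 < e := by
  have hpt : 1 ≤ p ^ t := Nat.one_le_pow _ _ hp.pos
  have hpt1 : 0 < p ^ t - 1 := by
    have : 2 ≤ p := hp.two_le
    have : 2 ^ t ≤ p ^ t := Nat.pow_le_pow_left this t
    have h2 : 2 ≤ 2 ^ t := by
      calc 2 = 2 ^ 1 := rfl
      _ ≤ 2 ^ t := Nat.pow_le_pow_right (by norm_num) ht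
    omega
  have he0 : 0 < e := Nat.pos_of_dvd_of_pos hdvd hpt1
  have hpe : ¬ p ∣ e := by
    intro h
    have h1 : p ∣ p ^ t - 1 := h.trans hdvd
    have hppt : p ∣ p ^ t := dvd_pow_self p (by omega)
    have h2 : p ∣ p ^ t - (p ^ t - 1) := Nat.dvd_sub hppt h1
    have h3 : p ^ t - (p ^ t - 1) = 1 := by omega
    rw [h3] at h2
    have := Nat.le_of_dvd one_pos h2
    have := hp.two_le
    omega
  have hpow : ((p : ℕ) : ZMod e) ^ t = 1 := by
    have : ((p ^ t - 1 : ℕ) : ZMod e) = 0 := by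
      rw [ZMod.natCast_eq_zero_iff]; exact hdvd
    have h2 : ((p ^ t : ℕ) : ZMod e) = 1 := by
      have : (p ^ t : ℕ) = (p ^ t - 1) + 1 := by omega
      rw [this, Nat.cast_add, Nat.cast_one, ‹((p ^ t - 1 : ℕ) : ZMod e) = 0›, zero_add]
    rw [← Nat.cast_pow]; exact h2
  refine ⟨?_, hpe, he0⟩
  have := orderOf_dvd_of_pow_eq_one hpow
  exact Nat.le_of_dvd (by omega) this

lemma take_sum_eq (n : ℕ) (hn : 0 < n) (L : List ℕ) (hL : L = n.divisors.sort (· ≤ ·))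
    (j : ℕ) (hj1 : 1 ≤ j) (hj2 : j < n.divisors.card) :
    ((L.take j).map Nat.totient).sum
      = ∑ d ∈ n.divisors.filter (· ≤ L.getD (j - 1) 0), Nat.totient d := by
  have hlen : L.length = n.divisors.card := by rw [hL]; exact Finset.length_sort _
  have hnodup : L.Nodup := by rw [hL]; exact Finset.sort_nodup _ _
  have hsort : L.Pairwise (· < ·) := by rw [hL]; exact (Finset.sortedLT_sort _).pairwise
  have hmem : ∀ d, d ∈ L ↔ d ∈ n.divisors := by
    intro d; rw [hL]; exact Finset.mem_sort _
  have hj1' : j - 1 < L.length := by omega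
  have hD : L.getD (j - 1) 0 = L[j-1] := List.getD_eq_getElem L 0 hj1'
  have hset : (L.take j).toFinset = n.divisors.filter (· ≤ L.getD (j - 1) 0) := by
    have hmono : ∀ (a b : ℕ) (ha : a < L.length) (hb : b < L.length), a < b → L[a] < L[b] := by
      intro a b ha hb hab
      have := hsort.rel_get_of_lt (a := ⟨a, ha⟩) (b := ⟨b, hb⟩) (Fin.mk_lt_mk.mpr hab)
      simpa using this
    ext d
    simp only [List.mem_toFinset, Finset.mem_filter]
    constructor
    · intro hd
      rw [List.mem_take_iff_getElem] at hd
      obtain ⟨i, hi, rfl⟩ := hd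
      have hiL : i < L.length := by omega
      refine ⟨(hmem _).1 (List.getElem_mem hiL), ?_⟩
      rw [hD]
      rcases Nat.lt_or_ge i (j - 1) with h | h
      · exact le_of_lt (hmono _ _ hiL hj1' h)
      · have hieq : i = j - 1 := by omega
        subst hieq; exact le_rfl
    · intro ⟨hd, hdle⟩
      have hdL : d ∈ L := (hmem d).2 hd
      rw [List.mem_iff_getElem] at hdL
      obtain ⟨i, hi, rfl⟩ := hdL
      have hij : i < j := by
        by_contra hij
        push_neg at hij
        have := hmono (j - 1) i hj1' hi (by omega)
        rw [hD] at hdle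
        omega
      rw [List.mem_take_iff_getElem]
      exact ⟨i, by omega, rfl⟩
  rw [← hset, List.sum_toFinset _ (hnodup.sublist (List.take_sublist j L))]

lemma sum_totient_pow {p : ℕ} (hp : p.Prime) (k : ℕ) :
    ∑ i ∈ Finset.range (k + 1), Nat.totient (p ^ i) = p ^ k := by
  have := Nat.sum_totient (p ^ k)
  rw [Nat.divisors_prime_pow hp] at this
  rw [← this, Finset.sum_map]
  rfl

lemma getD_lt (n : ℕ) (hn : 0 < n) (L : List ℕ) (hL : L = n.divisors.sort (· ≤ ·))
    (j : ℕ) (hj1 : 1 ≤ j) (hj2 : j < n.divisors.card) :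
    L.getD (j - 1) 0 < n := by
  have hlen : L.length = n.divisors.card := by rw [hL]; exact Finset.length_sort _
  have hsort : L.Pairwise (· < ·) := by rw [hL]; exact (Finset.sortedLT_sort _).pairwise
  have hmem : ∀ d, d ∈ L → d ∈ n.divisors := by
    intro d hd; rw [hL] at hd; exact (Finset.mem_sort _).mp hd
  have hcard : 0 < n.divisors.card := by omega
  have h1 : j - 1 < L.length := by omega
  have h2 : n.divisors.card - 1 < L.length := by omega
  have hD : L.getD (j - 1) 0 = L[j-1] := List.getD_eq_getElem L 0 h1
  rw [hD]
  have hlast : L[n.divisors.card - 1] ≤ n := by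
    have := hmem _ (List.getElem_mem h2)
    exact Nat.divisor_le this
  have : L[j-1] < L[n.divisors.card - 1] :=
    hsort.rel_get_of_lt (a := ⟨j-1, h1⟩) (b := ⟨n.divisors.card - 1, h2⟩)
      (Fin.mk_lt_mk.mpr (by omega))
  omega

lemma main_aux (p : ℕ) (hp : p.Prime) (n : ℕ) (hn : 0 < n)
    (L : List ℕ) (hL : L = n.divisors.sort (· ≤ ·))
    (j : ℕ) (hj1 : 1 ≤ j) (hj2 : j < n.divisors.card)
    (m : ℕ) (hm : m = 1 + ((L.take j).map Nat.totient).sum)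
    (hbig : ∀ e ∈ n.divisors, L.getD (j - 1) 0 < e → m < lstar p e) :
    ¬ ∃ g : Polynomial (ZMod p), g ∣ X ^ n - 1 ∧ g.natDegree = m := by
  haveI : Fact p.Prime := ⟨hp⟩
  classical
  rintro ⟨g, hgdvd, hgdeg⟩
  have hm1 : 1 ≤ m := hm ▸ Nat.le_add_right 1 _
  set k := n.factorization p with hk
  set n' := ordCompl[p] n with hn'
  have hn'pos : 0 < n' := Nat.ordCompl_pos p hn.ne'
  have hnn' : p ^ k * n' = n := Nat.ordProj_mul_ordCompl_eq_self n p
  have hpn' : ¬ p ∣ n' := Nat.not_dvd_ordCompl hp hn.ne'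
  -- X^n - 1 ≠ 0
  have hXn : (X ^ n - 1 : (ZMod p)[X]) ≠ 0 := by
    have : (X ^ n - 1 : (ZMod p)[X]) = X ^ n - C 1 := by rw [Polynomial.C_1]
    rw [this]
    exact (Polynomial.monic_X_pow_sub_C 1 hn.ne').ne_zero
  have hg0 : g ≠ 0 := by rintro rfl; exact hXn (zero_dvd_iff.mp hgdvd)
  set K := AlgebraicClosure (ZMod p) with hK
  haveI : CharP K p := charP_of_injective_algebraMap (algebraMap (ZMod p) K).injective p
  set gK := g.map (algebraMap (ZMod p) K) with hgK
  have hgK0 : gK ≠ 0 := Polynomial.map_ne_zero hg0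
  have hdeg : gK.natDegree = m := by rw [hgK, Polynomial.natDegree_map]; exact hgdeg
  have hsplit : m = Multiset.card gK.roots := by
    rw [← hdeg]
    exact (Polynomial.splits_iff_card_roots.mp (IsAlgClosed.splits gK)).symm
  have hXnK : (X ^ n - 1 : K[X]) ≠ 0 := by
    have : (X ^ n - 1 : K[X]) = X ^ n - C 1 := by rw [Polynomial.C_1]
    rw [this]
    exact (Polynomial.monic_X_pow_sub_C 1 hn.ne').ne_zero
  have hdvdK : gK ∣ (X ^ n - 1 : K[X]) := by
    have := Polynomial.map_dvd (algebraMap (ZMod p) K) hgdvd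
    simpa using this
  have hfact : (X ^ n - 1 : K[X]) = (X ^ n' - 1) ^ p ^ k := by
    rw [sub_pow_expChar_pow, ← pow_mul, one_pow, mul_comm n' (p ^ k), hnn']
  set R := (X ^ n' - 1 : K[X]).roots with hR
  have hn'K : (n' : K) ≠ 0 := by
    rw [Ne, CharP.cast_eq_zero_iff K p n']; exact hpn'
  have hsep : (X ^ n' - 1 : K[X]).Separable := by
    have h : (X ^ n' - 1 : K[X]) = X ^ n' - C 1 := by rw [Polynomial.C_1]
    rw [h]
    exact Polynomial.separable_X_pow_sub_C 1 hn'K one_ne_zero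
  have hRnodup : R.Nodup := Polynomial.nodup_roots hsep
  have hroots_le : gK.roots ≤ p ^ k • R := by
    have h := Polynomial.roots.le_of_dvd hXnK hdvdK
    rwa [hfact, Polynomial.roots_pow] at h
  set T := gK.roots.toFinset with hT
  -- each root is in R
  have hTR : ∀ α ∈ T, α ∈ R := by
    intro α hα
    rw [hT, Multiset.mem_toFinset] at hα
    have h1 : 0 < gK.roots.count α := Multiset.count_pos.mpr hα
    have h2 : gK.roots.count α ≤ (p ^ k • R).count α := Multiset.count_le_of_le α hroots_le
    rw [Multiset.count_nsmul] at h2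
    have h3 : 0 < R.count α := by
      rcases Nat.eq_zero_or_pos (R.count α) with h | h
      · rw [h, mul_zero] at h2; omega
      · exact h
    exact Multiset.count_pos.mp h3
  have hXn'K : (X ^ n' - 1 : K[X]) ≠ 0 := by
    have h : (X ^ n' - 1 : K[X]) = X ^ n' - C 1 := by rw [Polynomial.C_1]
    rw [h]
    exact (Polynomial.monic_X_pow_sub_C 1 hn'pos.ne').ne_zero
  have hTfacts : ∀ α ∈ T, orderOf α ∣ n' ∧ 0 < orderOf α ∧ ¬ p ∣ orderOf α ∧
      orderOf ((p : ℕ) : ZMod (orderOf α)) ≤ m := by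
    intro α hα
    have hαR := hTR α hα
    have hα1 : α ^ n' = 1 := by
      rw [hR, Polynomial.mem_roots hXn'K] at hαR
      have h := hαR
      simp only [Polynomial.IsRoot, Polynomial.eval_sub, Polynomial.eval_pow,
        Polynomial.eval_X, Polynomial.eval_one, sub_eq_zero] at h
      exact h
    have hα0 : α ≠ 0 := by
      intro h
      rw [h, zero_pow hn'pos.ne'] at hα1
      exact zero_ne_one hα1
    have hord : orderOf α ∣ n' := orderOf_dvd_of_pow_eq_one hα1
    have he0 : 0 < orderOf α := by
      rcases Nat.eq_zero_or_pos (orderOf α) with h | h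
      · rw [h] at hord; exact absurd (Nat.eq_zero_of_zero_dvd hord) hn'pos.ne'
      · exact h
    have haev : aeval α g = 0 := by
      rw [hT, Multiset.mem_toFinset, hgK, Polynomial.mem_roots hgK0] at hα
      rw [Polynomial.aeval_def, ← Polynomial.eval_map]
      exact hα
    obtain ⟨t, ht1, ht2, hdvd⟩ := key hp g hg0 α hα0 haev
    obtain ⟨hle, hpe, _⟩ := order_le_of_dvd hp ht1 hdvd
    exact ⟨hord, he0, hpe, hle.trans (hgdeg ▸ ht2)⟩
  set E := T.image orderOf with hE
  have hEfacts : ∀ e ∈ E, 0 < e ∧ ¬ p ∣ e ∧ e ∣ n' ∧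
      orderOf ((p : ℕ) : ZMod e) ≤ m := by
    intro e he
    obtain ⟨α, hαT, rfl⟩ := Finset.mem_image.mp he
    obtain ⟨h1, h2, h3, h4⟩ := hTfacts α hαT
    exact ⟨h2, h3, h1, h4⟩
  have hcount : ∀ α ∈ T, gK.roots.count α ≤ p ^ k := by
    intro α hα
    have h2 := Multiset.count_le_of_le α hroots_le
    rw [Multiset.count_nsmul] at h2
    have h3 : R.count α ≤ 1 := le_of_eq (Multiset.count_eq_one_of_mem hRnodup (hTR α hα))
    calc gK.roots.count α ≤ p ^ k * R.count α := h2
    _ ≤ p ^ k * 1 := Nat.mul_le_mul_left _ h3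
    _ = p ^ k := mul_one _
  have hm_le1 : m ≤ ∑ α ∈ T, p ^ k := by
    rw [hsplit, ← Multiset.toFinset_sum_count_eq]
    exact Finset.sum_le_sum hcount
  have hfiltcard : ∀ e ∈ E, (T.filter (fun α => orderOf α = e)).card ≤ Nat.totient e := by
    intro e he
    obtain ⟨hepos, hpe, -, -⟩ := hEfacts e he
    haveI : NeZero ((e : ℕ) : K) := ⟨by rw [Ne, CharP.cast_eq_zero_iff K p]; exact hpe⟩
    have hsub : T.filter (fun α => orderOf α = e) ⊆
        (Polynomial.cyclotomic e K).roots.toFinset := by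
      intro α hα
      rw [Finset.mem_filter] at hα
      obtain ⟨hαT, hαe⟩ := hα
      rw [Multiset.mem_toFinset, Polynomial.mem_roots (Polynomial.cyclotomic_ne_zero e K)]
      rw [Polynomial.isRoot_cyclotomic_iff]
      rw [← hαe]
      exact IsPrimitiveRoot.orderOf α
    calc (T.filter (fun α => orderOf α = e)).card
        ≤ (Polynomial.cyclotomic e K).roots.toFinset.card := Finset.card_le_card hsub
    _ ≤ Multiset.card (Polynomial.cyclotomic e K).roots := Multiset.toFinset_card_le _
    _ ≤ (Polynomial.cyclotomic e K).natDegree := Polynomial.card_roots' _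
    _ = Nat.totient e := Polynomial.natDegree_cyclotomic e K
  have hm_le2 : m ≤ ∑ e ∈ E, p ^ k * Nat.totient e := by
    calc m ≤ ∑ α ∈ T, p ^ k := hm_le1
    _ = T.card * p ^ k := by rw [Finset.sum_const, smul_eq_mul]
    _ = (∑ e ∈ E, (T.filter (fun α => orderOf α = e)).card) * p ^ k := by
        rw [← Finset.card_eq_sum_card_image]
    _ = ∑ e ∈ E, (T.filter (fun α => orderOf α = e)).card * p ^ k := by
        rw [Finset.sum_mul]
    _ ≤ ∑ e ∈ E, Nat.totient e * p ^ k :=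
        Finset.sum_le_sum fun e he => Nat.mul_le_mul_right _ (hfiltcard e he)
    _ = ∑ e ∈ E, p ^ k * Nat.totient e := by simp [mul_comm]
  have hsum_e : ∀ e ∈ E, p ^ k * Nat.totient e
      = ∑ i ∈ Finset.range (k + 1), Nat.totient (p ^ i * e) := by
    intro e he
    obtain ⟨hepos, hpe, -, -⟩ := hEfacts e he
    have hcop : ∀ i : ℕ, Nat.Coprime (p ^ i) e :=
      fun i => ((Nat.Prime.coprime_iff_not_dvd hp).mpr hpe).pow_left _
    calc p ^ k * Nat.totient e
        = (∑ i ∈ Finset.range (k + 1), Nat.totient (p ^ i)) * Nat.totient e := by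
          rw [sum_totient_pow hp]
    _ = ∑ i ∈ Finset.range (k + 1), Nat.totient (p ^ i) * Nat.totient e := by
          rw [Finset.sum_mul]
    _ = ∑ i ∈ Finset.range (k + 1), Nat.totient (p ^ i * e) := by
          refine Finset.sum_congr rfl fun i _ => ?_
          rw [Nat.totient_mul (hcop i)]
  have hm_le3 : m ≤ ∑ x ∈ E ×ˢ Finset.range (k + 1), Nat.totient (p ^ x.2 * x.1) := by
    rw [Finset.sum_product]
    calc m ≤ ∑ e ∈ E, p ^ k * Nat.totient e := hm_le2
    _ = ∑ e ∈ E, ∑ i ∈ Finset.range (k + 1), Nat.totient (p ^ i * e) :=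
        Finset.sum_congr rfl hsum_e
  have hinj : ∀ x ∈ E ×ˢ Finset.range (k + 1), ∀ y ∈ E ×ˢ Finset.range (k + 1),
      (fun x : ℕ × ℕ => p ^ x.2 * x.1) x = (fun x : ℕ × ℕ => p ^ x.2 * x.1) y → x = y := by
    rintro ⟨e, i⟩ hx ⟨e', i'⟩ hy hxy
    rw [Finset.mem_product] at hx hy
    obtain ⟨hepos, hpe, -, -⟩ := hEfacts e hx.1
    obtain ⟨hepos', hpe', -, -⟩ := hEfacts e' hy.1
    simp only at hxy
    have hfi : i = i' := by
      have h1 : (p ^ i * e).factorization p = i := by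
        rw [Nat.factorization_mul (pow_pos hp.pos i).ne' hepos.ne',
          Nat.Prime.factorization_pow hp]
        simp [Nat.factorization_eq_zero_of_not_dvd hpe]
      have h2 : (p ^ i' * e').factorization p = i' := by
        rw [Nat.factorization_mul (pow_pos hp.pos i').ne' hepos'.ne',
          Nat.Prime.factorization_pow hp]
        simp [Nat.factorization_eq_zero_of_not_dvd hpe']
      rw [← h1, ← h2, hxy]
    subst hfi
    have he : e = e' := Nat.eq_of_mul_eq_mul_left (pow_pos hp.pos i) hxy
    rw [he]
  have himg : ∑ x ∈ E ×ˢ Finset.range (k + 1), Nat.totient (p ^ x.2 * x.1)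
      = ∑ d ∈ (E ×ˢ Finset.range (k + 1)).image (fun x => p ^ x.2 * x.1), Nat.totient d :=
    (Finset.sum_image hinj).symm
  have hSsub : (E ×ˢ Finset.range (k + 1)).image (fun x => p ^ x.2 * x.1)
      ⊆ n.divisors.filter (· ≤ L.getD (j - 1) 0) := by
    intro d hd
    obtain ⟨⟨e, i⟩, hx, rfl⟩ := Finset.mem_image.mp hd
    rw [Finset.mem_product] at hx
    obtain ⟨hepos, hpe, hen', hordle⟩ := hEfacts e hx.1
    have hik : i ≤ k := by
      have := Finset.mem_range.mp hx.2; omega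
    have hdvdn : p ^ i * e ∣ n := by
      calc p ^ i * e ∣ p ^ k * n' := mul_dvd_mul (pow_dvd_pow p hik) hen'
      _ = n := hnn'
    have hmemdiv : p ^ i * e ∈ n.divisors := Nat.mem_divisors.mpr ⟨hdvdn, hn.ne'⟩
    rw [Finset.mem_filter]
    refine ⟨hmemdiv, ?_⟩
    by_contra hgt
    push_neg at hgt
    have hlt := hbig _ hmemdiv hgt
    rw [lstar_pow_mul hp hepos hpe i] at hlt
    omega
  have hfinal : m ≤ ∑ d ∈ n.divisors.filter (· ≤ L.getD (j - 1) 0), Nat.totient d := by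
    calc m ≤ ∑ x ∈ E ×ˢ Finset.range (k + 1), Nat.totient (p ^ x.2 * x.1) := hm_le3
    _ = ∑ d ∈ (E ×ˢ Finset.range (k + 1)).image (fun x => p ^ x.2 * x.1), Nat.totient d :=
        himg
    _ ≤ ∑ d ∈ n.divisors.filter (· ≤ L.getD (j - 1) 0), Nat.totient d :=
        Finset.sum_le_sum_of_subset hSsub
  rw [← take_sum_eq n hn L hL j hj1 hj2] at hfinal
  obtain ⟨s, hs⟩ : ∃ s, ((L.take j).map Nat.totient).sum = s := ⟨_, rfl⟩
  rw [hs] at hm hfinal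
  omega

theorem stmt13 (p : ℕ) (hp : p.Prime) (n : ℕ) (hn : 0 < n)
    (L : List ℕ) (hL : L = n.divisors.sort (· ≤ ·))
    (j : ℕ) (hj1 : 1 ≤ j) (hj2 : j < n.divisors.card)
    (m : ℕ) (hm : m = 1 + ((L.take j).map Nat.totient).sum)
    (hbig : ∀ e ∈ n.divisors, L.getD (j - 1) 0 < e → m < lstar p e) :
    (¬ ∃ g : Polynomial (ZMod p), g ∣ X ^ n - 1 ∧ g.natDegree = m) ∧
      ¬ IsPPractical p n := by
  have h1 := main_aux p hp n hn L hL j hj1 hj2 m hm hbig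
  refine ⟨h1, ?_⟩
  intro hpp
  have hm1 : 1 ≤ m := hm ▸ Nat.le_add_right 1 _
  have hDlt : L.getD (j - 1) 0 < n := getD_lt n hn L hL j hj1 hj2
  have hsum := take_sum_eq n hn L hL j hj1 hj2
  have hsub : n.divisors.filter (· ≤ L.getD (j - 1) 0) ⊆ n.divisors.erase n := by
    intro d hd
    rw [Finset.mem_filter] at hd
    refine Finset.mem_erase.mpr ⟨?_, hd.1⟩
    intro h
    rw [h] at hd
    omega
  have h2 : ∑ d ∈ n.divisors.erase n, Nat.totient d + Nat.totient n = n := by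
    rw [Finset.sum_erase_add _ _ (Nat.mem_divisors_self n hn.ne')]
    exact Nat.sum_totient n
  have hφn : 1 ≤ Nat.totient n := Nat.totient_pos.mpr hn
  have h3 : ∑ d ∈ n.divisors.filter (· ≤ L.getD (j - 1) 0), Nat.totient d
      ≤ ∑ d ∈ n.divisors.erase n, Nat.totient d := Finset.sum_le_sum_of_subset hsub
  have hmn : m ≤ n := by
    rw [hm, hsum]
    omega
  obtain ⟨g, hg⟩ := hpp m hm1 hmn
  exact h1 ⟨g, hg⟩
end
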